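/- Let Y be a nonempty subset of a metric space X and f : Y → L^∞(V) Lipschitz. For the extension F_x(v) = inf_{y ∈ Y}(f_y(v) + dil(f,y)·d(x,y)), the pointwise dilatation is preserved: for every y ∈ Y, dil(F,y) = dil(f,y), where dil(F,y) = sup_{x ∈ X, x≠y} d(F(y),F(x))/d(y,x). -/

import Mathlib

/-!
Write `D y = dil(f, y)`. Each coordinate `y ↦ f_y(v)` satisfies
`|f_y(v) - f_{y'}(v)| ≤ min (D y) (D y') · d(y, y')`, and this is exactly what makes the
infimum `F_x(v) = inf_y (f_y(v) + D y · d(x, y))` agree with `f` on `Y` and satisfy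
`|F_x(v) - f_y(v)| ≤ D y · d(x, y)`. Hence `F` is `D y`-Lipschitz at `y`, so `dil(F, y) ≤ D y`,
while `dil(F, y) ≥ dil(f, y)` because `F` extends `f`.
-/

open scoped ENNReal NNReal

/-- The pointwise dilatation `dil(g, a) = sup_{a' ≠ a} d(g a, g a') / d(a, a')`. -/
noncomputable def ptDil {A E : Type*} [MetricSpace A] [MetricSpace E]
    (g : A → E) (a : A) : ℝ :=
  sSup {r : ℝ | ∃ a' : A, a' ≠ a ∧ r = dist (g a) (g a') / dist a a'}

section PtDil

variable {A E : Type*} [MetricSpace A] [MetricSpace E] {g : A → E} {a : A} {C : ℝ}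

theorem ptDil_nonneg (g : A → E) (a : A) : 0 ≤ ptDil g a :=
  Real.sSup_nonneg fun _ ⟨_, _, hr⟩ => hr ▸ by positivity

theorem ptDil_le_of_dist_le (hC₀ : 0 ≤ C) (hC : ∀ a', dist (g a) (g a') ≤ C * dist a a') :
    ptDil g a ≤ C :=
  Real.sSup_le (fun _ ⟨a', _, hr⟩ => hr ▸ div_le_of_le_mul₀ dist_nonneg hC₀ (hC a')) hC₀

theorem dist_le_ptDil_mul (hC : ∀ a', dist (g a) (g a') ≤ C * dist a a') (a' : A) :
    dist (g a) (g a') ≤ ptDil g a * dist a a' := by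
  rcases eq_or_ne a' a with rfl | ha'
  · simp
  rw [← div_le_iff₀ (dist_pos.2 ha'.symm)]
  refine le_csSup ⟨C, ?_⟩ ⟨a', ha', rfl⟩
  rintro _ ⟨b, hb, rfl⟩
  exact (div_le_iff₀ (dist_pos.2 hb.symm)).2 (hC b)

theorem ptDil_comp_subtype_val_le {s : Set A} {a : s}
    (hC : ∀ a', dist (g a) (g a') ≤ C * dist (a : A) a') :
    ptDil (g ∘ (↑) : s → E) a ≤ ptDil g a :=
  ptDil_le_of_dist_le (ptDil_nonneg g a) fun a' => dist_le_ptDil_mul hC a'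

end PtDil

section McShane

variable {X : Type*} [PseudoMetricSpace X] {Y : Set X} {h D : Y → ℝ}

noncomputable def mcShaneInf (h D : Y → ℝ) (x : X) : ℝ :=
  ⨅ y : Y, h y + D y * dist x y

theorem sub_le_mul_dist_add_mul_dist (hD : ∀ y, 0 ≤ D y)
    (hh : ∀ y y', |h y - h y'| ≤ D y * dist (y : X) y') (x : X) (y y' : Y) :
    h y - h y' ≤ D y * dist x y + D y' * dist x y' := by
  have htri : dist (y : X) y' ≤ dist x y + dist x y' := dist_triangle_left _ _ _
  have h₁ : h y - h y' ≤ D y * dist (y : X) y' := (abs_le.1 (hh y y')).2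
  have h₂ : h y - h y' ≤ D y' * dist (y : X) y' := by
    have := (abs_le.1 (hh y' y)).1
    rw [dist_comm]; linarith
  rcases le_total (D y) (D y') with hDD | hDD
  · nlinarith [mul_le_mul_of_nonneg_left htri (hD y),
      mul_le_mul_of_nonneg_right hDD (dist_nonneg : 0 ≤ dist x (y' : X))]
  · nlinarith [mul_le_mul_of_nonneg_left htri (hD y'),
      mul_le_mul_of_nonneg_right hDD (dist_nonneg : 0 ≤ dist x (y : X))]

theorem abs_mcShaneInf_sub_le (hD : ∀ y, 0 ≤ D y)
    (hh : ∀ y y', |h y - h y'| ≤ D y * dist (y : X) y') (x : X) (y : Y) :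
    |mcShaneInf h D x - h y| ≤ D y * dist x y := by
  have : Nonempty Y := ⟨y⟩
  have hle : mcShaneInf h D x ≤ h y + D y * dist x y := by
    refine ciInf_le ⟨h y - D y * dist x y, ?_⟩ y
    rintro _ ⟨y', rfl⟩
    linarith [sub_le_mul_dist_add_mul_dist hD hh x y y']
  have hge : h y - D y * dist x y ≤ mcShaneInf h D x :=
    le_ciInf fun y' => by linarith [sub_le_mul_dist_add_mul_dist hD hh x y y']
  exact abs_sub_le_iff.2 ⟨by linarith, by linarith⟩

end McShane

theorem lp.abs_apply_sub_le_dist {V : Type*} (a b : lp (fun _ : V => ℝ) ∞) (v : V) :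
    |a v - b v| ≤ dist a b := by
  simpa [dist_eq_norm, lp.coeFn_sub] using lp.norm_apply_le_norm ENNReal.top_ne_zero (a - b) v

section LInfty

variable {X V : Type*} [PseudoMetricSpace X] {Y : Set X} {f : Y → lp (fun _ : V => ℝ) ∞}
  {D : Y → ℝ}

theorem abs_mcShaneInf_apply_sub_le (hD : ∀ y, 0 ≤ D y)
    (hfD : ∀ y y', dist (f y) (f y') ≤ D y * dist (y : X) y') (x : X) (y : Y) (v : V) :
    |mcShaneInf (fun y => f y v) D x - f y v| ≤ D y * dist x y :=
  abs_mcShaneInf_sub_le hD (fun y y' => (lp.abs_apply_sub_le_dist _ _ v).trans (hfD y y')) x y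

theorem memℓp_mcShaneInf (hD : ∀ y, 0 ≤ D y)
    (hfD : ∀ y y', dist (f y) (f y') ≤ D y * dist (y : X) y') (y₀ : Y) (x : X) :
    Memℓp (fun v => mcShaneInf (fun y => f y v) D x) ∞ := by
  refine memℓp_infty ⟨‖f y₀‖ + D y₀ * dist x y₀, ?_⟩
  rintro _ ⟨v, rfl⟩
  have hf₀ : |f y₀ v| ≤ ‖f y₀‖ := lp.norm_apply_le_norm ENNReal.top_ne_zero (f y₀) v
  have habs := abs_sub_abs_le_abs_sub (mcShaneInf (fun y => f y v) D x) (f y₀ v)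
  have hdiff := abs_mcShaneInf_apply_sub_le hD hfD x y₀ v
  simp only [Real.norm_eq_abs]
  linarith

theorem dist_le_of_apply_eq_mcShaneInf (hD : ∀ y, 0 ≤ D y)
    (hfD : ∀ y y', dist (f y) (f y') ≤ D y * dist (y : X) y') {F : X → lp (fun _ : V => ℝ) ∞}
    (hF : ∀ x v, F x v = mcShaneInf (fun y => f y v) D x) (x : X) (y : Y) :
    dist (F x) (f y) ≤ D y * dist x y := by
  rw [dist_eq_norm]
  refine lp.norm_le_of_forall_le (mul_nonneg (hD y) dist_nonneg) fun v => ?_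
  rw [lp.coeFn_sub, Pi.sub_apply, hF, Real.norm_eq_abs]
  exact abs_mcShaneInf_apply_sub_le hD hfD x y v

end LInfty

/-- The McShane-Gromov extension `F_x(v) = inf_{y ∈ Y}(f_y(v) + dil(f,y)·d(x,y))` of a
Lipschitz map `f : Y → L^∞(V)` preserves the pointwise dilatation: `dil(F, y) = dil(f, y)`
for every `y ∈ Y`. -/
theorem stmt_2 {X V : Type*} [MetricSpace X] (Y : Set X) (hY : Y.Nonempty)
    (f : Y → lp (fun _ : V => ℝ) ∞) (L : ℝ≥0) (hf : LipschitzWith L f) :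
    ∃ F : X → lp (fun _ : V => ℝ) ∞,
      (∀ (x : X) (v : V), (F x : ∀ _ : V, ℝ) v
          = ⨅ y : Y, ((f y : ∀ _ : V, ℝ) v + ptDil f y * dist x (y : X))) ∧
      (∀ y : Y, ptDil F (y : X) = ptDil f y) := by
  obtain ⟨y₀, hy₀⟩ := hY
  have hD := ptDil_nonneg f
  have hfD : ∀ y y' : Y, dist (f y) (f y') ≤ ptDil f y * dist (y : X) y' :=
    fun y => dist_le_ptDil_mul (hf.dist_le_mul y)
  let F : X → lp (fun _ : V => ℝ) ∞ := fun x => ⟨_, memℓp_mcShaneInf hD hfD ⟨y₀, hy₀⟩ x⟩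
  have hF : ∀ x v, F x v = mcShaneInf (fun y => f y v) (ptDil f) x := fun _ _ => rfl
  have hFdist := dist_le_of_apply_eq_mcShaneInf hD hfD hF
  have hFf : ∀ y : Y, F y = f y := fun y => dist_le_zero.1 (by simpa using hFdist y y)
  have hFy : ∀ (y : Y) x, dist (F y) (F x) ≤ ptDil f y * dist (y : X) x := fun y x => by
    rw [hFf, dist_comm, dist_comm (y : X)]
    exact hFdist x y
  refine ⟨F, hF, fun y => le_antisymm (ptDil_le_of_dist_le (hD y) (hFy y)) ?_⟩
  calc ptDil f y = ptDil (F ∘ (↑)) y := by rw [show F ∘ (↑) = f from funext hFf]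
    _ ≤ ptDil F y := ptDil_comp_subtype_val_le (hFy y)
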